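/- Let f : ℝ² → ℝ be given by f(x₁,x₂) = a₁·cos(x₁+η₁) + a₂·cos(x₂+η₂) with a₁ > a₂ > 0 and η₁,η₂ ∈ ℝ. Then the zero set of f has no compact connected components; i.e., every connected component of f⁻¹({0}) is unbounded. -/

import Mathlib

open Real

/-!
Since `|a₂| ≤ |a₁|`, the equation `a₁ cos (x₁ + η₁) = -a₂ cos (x₂ + η₂)` can be solved for `x₁`
by a branch of `arccos` that depends continuously on `x₂`. So through every point of the nodal
set passes the graph `x₁ = g x₂` of a continuous function on all of `ℝ`; it is connected and
unbounded, hence so is the nodal component containing it.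
-/

open Bornology Set

theorem exists_continuous_cos_eq {X : Type*} [TopologicalSpace X] {c : X → ℝ}
    (hc : Continuous c) (hc_mem : ∀ t, c t ∈ Icc (-1) 1) {t₀ : X} {x : ℝ} (hx : cos x = c t₀) :
    ∃ g : X → ℝ, Continuous g ∧ g t₀ = x ∧ ∀ t, cos (g t) = c t := by
  have hcos_arccos : ∀ t, cos (arccos (c t)) = c t := fun t =>
    cos_arccos (hc_mem t).1 (hc_mem t).2
  obtain ⟨k, hk⟩ := cos_eq_cos_iff.mp ((hcos_arccos t₀).trans hx.symm)
  obtain ⟨s, hs, hxs⟩ : ∃ s : ℝ, (s = 1 ∨ s = -1) ∧ x = 2 * k * π + s * arccos (c t₀) := by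
    rcases hk with h | h
    · exact ⟨1, Or.inl rfl, by rw [h, one_mul]⟩
    · exact ⟨-1, Or.inr rfl, by rw [h]; ring⟩
  refine ⟨fun t => 2 * k * π + s * arccos (c t), by fun_prop, hxs.symm, fun t => ?_⟩
  dsimp only
  rw [add_comm, show 2 * (k : ℝ) * π = k * (2 * π) by ring, cos_add_int_mul_two_pi]
  rcases hs with rfl | rfl
  · rw [one_mul, hcos_arccos]
  · rw [neg_one_mul, cos_neg, hcos_arccos]

theorem exists_continuous_graph_cos_add_cos_eq_zero {a₁ a₂ η₁ η₂ : ℝ} (ha₁ : a₁ ≠ 0)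
    (ha : |a₂| ≤ |a₁|) {p : ℝ × ℝ} (hp : a₁ * cos (p.1 + η₁) + a₂ * cos (p.2 + η₂) = 0) :
    ∃ g : ℝ → ℝ, Continuous g ∧ g p.2 = p.1 ∧
      ∀ t, a₁ * cos (g t + η₁) + a₂ * cos (t + η₂) = 0 := by
  set c : ℝ → ℝ := fun t => -(a₂ / a₁) * cos (t + η₂)
  have hc_mem : ∀ t, c t ∈ Icc (-1) 1 := fun t => by
    rw [mem_Icc, ← abs_le, abs_mul, abs_neg, abs_div]
    exact mul_le_one₀ ((div_le_one (abs_pos.mpr ha₁)).mpr ha) (abs_nonneg _) (abs_cos_le_one _)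
  have hsolve : ∀ x t, a₁ * cos (x + η₁) + a₂ * cos (t + η₂) = 0 ↔ cos (x + η₁) = c t :=
    fun x t => by
      simp only [c]
      constructor <;> intro h <;> field_simp at h ⊢ <;> linarith
  obtain ⟨g, hg, hgp, hgc⟩ :=
    exists_continuous_cos_eq (by fun_prop) hc_mem ((hsolve p.1 p.2).mp hp)
  refine ⟨fun t => g t - η₁, by fun_prop, by simp [hgp], fun t => (hsolve _ t).mpr ?_⟩
  simpa using hgc t

theorem not_isBounded_connectedComponentIn_of_graph_subset {X : Type*} [PseudoMetricSpace X]
    {S : Set (X × ℝ)} {g : ℝ → X} (hg : Continuous g) (hgS : ∀ t, (g t, t) ∈ S) (t₀ : ℝ) :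
    ¬ IsBounded (connectedComponentIn S (g t₀, t₀)) := by
  intro hbdd
  have hgraph : range (fun t => (g t, t)) ⊆ connectedComponentIn S (g t₀, t₀) :=
    (isPreconnected_range (by fun_prop)).subset_connectedComponentIn ⟨t₀, rfl⟩
      (range_subset_iff.mpr hgS)
  have hsnd : Prod.snd '' range (fun t => (g t, t)) = univ := by
    simp [← range_comp, Function.comp_def]
  apply NormedSpace.unbounded_univ ℝ ℝ
  rw [← hsnd]
  exact LipschitzWith.prod_snd.isBounded_image (hbdd.subset hgraph)

/-- The deterministic Cilleruelo-type function
`f(x₁,x₂) = a₁·cos(x₁+η₁) + a₂·cos(x₂+η₂)` with `a₁ > a₂ > 0` has no compact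
(bounded) nodal components: every connected component of its zero set is unbounded. -/
theorem cilleruelo_no_compact_nodal_components
    (a₁ a₂ η₁ η₂ : ℝ) (h₁ : a₁ > a₂) (h₂ : a₂ > 0)
    (f : ℝ × ℝ → ℝ)
    (hf : ∀ x : ℝ × ℝ, f x = a₁ * Real.cos (x.1 + η₁) + a₂ * Real.cos (x.2 + η₂)) :
    ∀ p ∈ f ⁻¹' {0}, ¬ Bornology.IsBounded (connectedComponentIn (f ⁻¹' {0}) p) := by
  intro p hp
  have ha₁ : 0 < a₁ := h₂.trans h₁
  obtain ⟨g, hg, hgp, hgz⟩ := exists_continuous_graph_cos_add_cos_eq_zero (η₁ := η₁)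
    ha₁.ne' (by rw [abs_of_pos h₂, abs_of_pos ha₁]; exact h₁.le) (by simpa [hf] using hp)
  rw [show p = (g p.2, p.2) from Prod.ext hgp.symm rfl]
  exact not_isBounded_connectedComponentIn_of_graph_subset hg (fun t => by simp [hf, hgz]) p.2
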